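/- The superconducting disc graph S D G of a handlebody H is 2-quasi-isometric to the E-electrification of the electrified disc graph E D G, where E = {E(c)} ranges over the subgraphs of discs meeting a discbusting I-bundle curve c in exactly two points. -/

import Mathlib

/-- Abstract model of the electrified disc graph of a handlebody `H` of genus `g ≥ 2`
together with its discbusting `I`-bundle curves. -/
structure DiscGraphSetup where
  /-- isotopy classes of essential discs in `H` -/
  Disc : Type
  /-- discbusting `I`-bundle curves on `∂H` -/
  IB : Type
  /-- the electrified disc graph: two distinct discs are joined iff some essential simple
  closed curve on `∂H` is disjoint from both boundaries -/
  EDG : SimpleGraph Disc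
  /-- the disc intersects the discbusting `I`-bundle curve in precisely two points -/
  meetsTwice : IB → Disc → Prop
  /-- every subgraph `E(c)` is nonempty: some disc meets `c` in exactly two points -/
  nonempty_Ec : ∀ c : IB, ∃ D : Disc, meetsTwice c D

namespace DiscGraphSetup

variable {S : DiscGraphSetup}

/-- The superconducting disc graph: in addition to the edges of the electrified disc
graph, two distinct discs are joined if some discbusting `I`-bundle curve intersects
both boundaries in precisely two points. -/
def SDG (S : DiscGraphSetup) : SimpleGraph S.Disc where
  Adj D E := D ≠ E ∧ (S.EDG.Adj D E ∨ ∃ c : S.IB, S.meetsTwice c D ∧ S.meetsTwice c E)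
  symm := ⟨fun D E h => ⟨h.1.symm, by
    rcases h.2 with h' | ⟨c, h1, h2⟩
    · exact Or.inl h'.symm
    · exact Or.inr ⟨c, h2, h1⟩⟩⟩
  loopless := ⟨fun D h => h.1 rfl⟩

/-- The `E`-electrification of the electrified disc graph: for each discbusting
`I`-bundle curve `c` a new vertex `v_c` is joined by an edge of length one to every
vertex of `E(c)`, i.e. to every disc meeting `c` in precisely two points. -/
def EElec (S : DiscGraphSetup) : SimpleGraph (S.Disc ⊕ S.IB) where
  Adj x y :=
    match x, y with
    | Sum.inl D, Sum.inl E => S.EDG.Adj D E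
    | Sum.inl D, Sum.inr c => S.meetsTwice c D
    | Sum.inr c, Sum.inl D => S.meetsTwice c D
    | Sum.inr _, Sum.inr _ => False
  symm := by
    constructor
    rintro (D | c) (E | d) h
    · exact S.EDG.adj_symm h
    · exact h
    · exact h
    · exact h.elim
  loopless := by
    constructor
    rintro (D | c) h
    · exact S.EDG.irrefl h
    · exact h

end DiscGraphSetup

namespace DiscGraphSetup

/-- Lemma A: turn an SDG-walk into an EElec-walk of at most twice the length. -/
lemma walkA {S : DiscGraphSetup} {D E : S.Disc} (p : S.SDG.Walk D E) :
    ∃ q : S.EElec.Walk (Sum.inl D) (Sum.inl E), q.length ≤ 2 * p.length := by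
  induction p with
  | nil => exact ⟨SimpleGraph.Walk.nil, by simp⟩
  | @cons u v w h p ih =>
    obtain ⟨q, hq⟩ := ih
    rcases h.2 with h' | ⟨c, h1, h2⟩
    · refine ⟨SimpleGraph.Walk.cons (show S.EElec.Adj (Sum.inl u) (Sum.inl v) from h') q, ?_⟩
      simpa [SimpleGraph.Walk.length_cons, Nat.mul_succ] using Nat.succ_le_succ
        (hq.trans (Nat.le_succ _))
    · refine ⟨SimpleGraph.Walk.cons (show S.EElec.Adj (Sum.inl _) (Sum.inr c) from h1)
        (SimpleGraph.Walk.cons (show S.EElec.Adj (Sum.inr c) (Sum.inl _) from h2) q), ?_⟩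
      simp only [SimpleGraph.Walk.length_cons, Nat.mul_succ]
      omega

/-- Lemma B: turn an EElec-walk into an SDG-walk of at most the same length. -/
lemma walkB' {S : DiscGraphSetup} : ∀ {x y : S.Disc ⊕ S.IB}
    (q : S.EElec.Walk x y) (E : S.Disc), y = Sum.inl E →
    (∀ D : S.Disc, x = Sum.inl D → ∃ p : S.SDG.Walk D E, p.length ≤ q.length) ∧
    (∀ c : S.IB, x = Sum.inr c → ∀ D : S.Disc, S.meetsTwice c D →
      ∃ p : S.SDG.Walk D E, p.length ≤ q.length) := by
  intro x y q
  induction q with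
  | nil =>
    rintro E rfl
    refine ⟨fun D hD => ?_, fun c hc => by simp at hc⟩
    cases Sum.inl_injective hD.symm
    exact ⟨SimpleGraph.Walk.nil, le_refl _⟩
  | @cons x y z h q ih =>
    rintro E rfl
    replace ih := ih E rfl
    constructor
    · rintro D rfl
      cases y with
      | inl F =>
        obtain ⟨p, hp⟩ := ih.1 F rfl
        have hadj : S.SDG.Adj D F := ⟨(show S.EDG.Adj D F from h).ne, Or.inl h⟩
        exact ⟨SimpleGraph.Walk.cons hadj p, by
          simpa [SimpleGraph.Walk.length_cons] using Nat.succ_le_succ hp⟩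
      | inr c =>
        obtain ⟨p, hp⟩ := ih.2 c rfl D h
        exact ⟨p, hp.trans (Nat.le_succ _)⟩
    · rintro c rfl D hD
      cases y with
      | inl F =>
        obtain ⟨p, hp⟩ := ih.1 F rfl
        by_cases hDF : D = F
        · subst hDF
          exact ⟨p, hp.trans (Nat.le_succ _)⟩
        · have hadj : S.SDG.Adj D F := ⟨hDF, Or.inr ⟨c, hD, h⟩⟩
          exact ⟨SimpleGraph.Walk.cons hadj p, by
            simpa [SimpleGraph.Walk.length_cons] using Nat.succ_le_succ hp⟩
      | inr d => exact absurd h (by simp [EElec])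

lemma dist_le_dist {S : DiscGraphSetup} (D E : S.Disc) :
    S.SDG.dist D E ≤ S.EElec.dist (Sum.inl D) (Sum.inl E) ∧
    S.EElec.dist (Sum.inl D) (Sum.inl E) ≤ 2 * S.SDG.dist D E := by
  by_cases hr : S.SDG.Reachable D E
  · obtain ⟨p, hp⟩ := hr.exists_walk_length_eq_dist
    obtain ⟨q, hq⟩ := walkA p
    have h2 : S.EElec.dist (Sum.inl D) (Sum.inl E) ≤ 2 * S.SDG.dist D E :=
      (SimpleGraph.dist_le q).trans (by omega)
    refine ⟨?_, h2⟩
    have hr' : S.EElec.Reachable (Sum.inl D) (Sum.inl E) := ⟨q⟩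
    obtain ⟨q', hq'⟩ := hr'.exists_walk_length_eq_dist
    obtain ⟨p', hp'⟩ := (walkB' q' _ rfl).1 D rfl
    exact (SimpleGraph.dist_le p').trans (by omega)
  · have hr' : ¬ S.EElec.Reachable (Sum.inl D) (Sum.inl E) := by
      intro ⟨q⟩
      obtain ⟨p, _⟩ := (walkB' q _ rfl).1 D rfl
      exact hr ⟨p⟩
    rw [SimpleGraph.dist_eq_zero_of_not_reachable hr,
      SimpleGraph.dist_eq_zero_of_not_reachable hr']
    omega

end DiscGraphSetup

/-- The superconducting disc graph is `2`-quasi-isometric to the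
`E`-electrification of the electrified disc graph: the vertex inclusion distorts
distances by a multiplicative and additive factor at most `2` and is `2`-coarsely
surjective. -/
theorem SDG_quasiIsometric_to_electrification (S : DiscGraphSetup) :
    (∀ D E : S.Disc,
      (S.SDG.dist D E : ℝ) ≤ 2 * S.EElec.dist (Sum.inl D) (Sum.inl E) + 2 ∧
      (S.EElec.dist (Sum.inl D) (Sum.inl E) : ℝ) ≤ 2 * S.SDG.dist D E + 2) ∧
    ∀ v : S.Disc ⊕ S.IB, ∃ D : S.Disc, S.EElec.dist (Sum.inl D) v ≤ 2 := by
  constructor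
  · intro D E
    obtain ⟨h1, h2⟩ := DiscGraphSetup.dist_le_dist D E
    constructor
    · have : (S.SDG.dist D E : ℝ) ≤ (S.EElec.dist (Sum.inl D) (Sum.inl E) : ℝ) :=
        Nat.cast_le.mpr h1
      have h0 : (0:ℝ) ≤ (S.EElec.dist (Sum.inl D) (Sum.inl E) : ℝ) := Nat.cast_nonneg _
      linarith
    · have : (S.EElec.dist (Sum.inl D) (Sum.inl E) : ℝ) ≤ 2 * (S.SDG.dist D E : ℝ) := by
        exact_mod_cast Nat.cast_le.mpr h2
      linarith
  · rintro (D | c)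
    · exact ⟨D, by rw [SimpleGraph.dist_self]; omega⟩
    · obtain ⟨D, hD⟩ := S.nonempty_Ec c
      refine ⟨D, ?_⟩
      have : S.EElec.Adj (Sum.inl D) (Sum.inr c) := hD
      calc S.EElec.dist (Sum.inl D) (Sum.inr c) ≤ 1 := SimpleGraph.dist_le (this.toWalk)
        _ ≤ 2 := by omega
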